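/- (Corollary 1) For λ ∈ [0,2π), e^{iλ} is an eigenvalue of U if and only if there exists φ ∈ ℂ² \ {0} such that the function Ψ̃_φ : ℤ → ℂ² defined by Ψ̃_φ(0) = φ, Ψ̃_φ(x) = T_{x−1}(λ)T_{x−2}(λ)⋯T_1(λ)T_0(λ)·φ for x > 0, and Ψ̃_φ(x) = T_x(λ)^{−1}T_{x+1}(λ)^{−1}⋯T_{−2}(λ)^{−1}T_{−1}(λ)^{−1}·φ for x < 0 is square-summable, i.e. Σ_{x∈ℤ} ‖Ψ̃_φ(x)‖² < ∞; in that case J^{−1}Ψ̃_φ is an eigenvector of U associated with e^{iλ}. -/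
import Mathlib


open scoped Real

/-- The coin matrix `C = e^{iΔ}[[α, β], [−conj β, conj α]]`. -/
noncomputable def coinM (a b : ℂ) (d : ℝ) : Matrix (Fin 2) (Fin 2) ℂ :=
  Complex.exp (Complex.I * d) • !![a, b; -(starRingEnd ℂ b), starRingEnd ℂ a]

/-- The transfer matrix `T(λ) = (1/α)[[e^{i(λ−Δ)}, −β], [−conj β, e^{−i(λ−Δ)}]]`. -/
noncomputable def transferM (a b : ℂ) (d l : ℝ) : Matrix (Fin 2) (Fin 2) ℂ :=
  a⁻¹ • !![Complex.exp (Complex.I * (l - d)), -b;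
           -(starRingEnd ℂ b), Complex.exp (-(Complex.I * (l - d)))]

/-- Square-summability of `Ψ : ℤ → ℂ²`, i.e. `Σ_{x∈ℤ} ‖Ψ(x)‖²_{ℂ²} < ∞`. -/
def SqSummable (Ψ : ℤ → Fin 2 → ℂ) : Prop :=
  Summable fun x : ℤ => ‖Ψ x 0‖ ^ 2 + ‖Ψ x 1‖ ^ 2

/-- The time evolution `U = SC`:  `(UΨ)(x) = ((C_{x+1}Ψ(x+1))_L, (C_{x−1}Ψ(x−1))_R)ᵀ`. -/
noncomputable def Uact (C : ℤ → Matrix (Fin 2) (Fin 2) ℂ) (Ψ : ℤ → Fin 2 → ℂ) :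
    ℤ → Fin 2 → ℂ :=
  fun x => ![(C (x + 1)).mulVec (Ψ (x + 1)) 0, (C (x - 1)).mulVec (Ψ (x - 1)) 1]

/-- The inverse of the unitary `J`:  `(J⁻¹Ψ)(x) = (Ψ_L(x+1), Ψ_R(x))ᵀ`. -/
def JinvAct (Ψ : ℤ → Fin 2 → ℂ) : ℤ → Fin 2 → ℂ := fun x => ![Ψ (x + 1) 0, Ψ x 1]

/-- `T_{n−1} T_{n−2} ⋯ T_1 T_0` for matrices indexed by `ℤ`. -/
noncomputable def prodZpos (T : ℤ → Matrix (Fin 2) (Fin 2) ℂ) :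
    ℕ → Matrix (Fin 2) (Fin 2) ℂ
  | 0 => 1
  | n + 1 => T n * prodZpos T n

/-- `T_{−n}⁻¹ T_{−n+1}⁻¹ ⋯ T_{−2}⁻¹ T_{−1}⁻¹` for matrices indexed by `ℤ`. -/
noncomputable def prodZneg (T : ℤ → Matrix (Fin 2) (Fin 2) ℂ) :
    ℕ → Matrix (Fin 2) (Fin 2) ℂ
  | 0 => 1
  | n + 1 => (T (-(n + 1 : ℕ)))⁻¹ * prodZneg T n

/-- `Ψ̃_φ(0) = φ`, `Ψ̃_φ(x) = T_{x−1}⋯T_0·φ` for `x > 0`, and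
`Ψ̃_φ(x) = T_x⁻¹⋯T_{−1}⁻¹·φ` for `x < 0`. -/
noncomputable def tpsi (T : ℤ → Matrix (Fin 2) (Fin 2) ℂ) (φ : Fin 2 → ℂ) :
    ℤ → Fin 2 → ℂ :=
  fun x => if 0 ≤ x then (prodZpos T x.toNat).mulVec φ else (prodZneg T (-x).toNat).mulVec φ

section Aux

open Complex Matrix

private lemma QW_conj_mul_self (z : ℂ) : (starRingEnd ℂ z) * z = (‖z‖ : ℂ)^2 := by
  rw [Complex.conj_mul']

private lemma QW_hab {a b : ℂ} (h : ‖a‖ ^ 2 + ‖b‖ ^ 2 = 1) :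
    (starRingEnd ℂ a) * a + (starRingEnd ℂ b) * b = 1 := by
  rw [QW_conj_mul_self, QW_conj_mul_self]
  exact_mod_cast congrArg (fun t : ℝ => (t : ℂ)) h

private lemma QW_core (a b p E u v w z : ℂ) (ha : a ≠ 0) (hp : p ≠ 0) (hE : E ≠ 0)
    (hab : (starRingEnd ℂ a) * a + (starRingEnd ℂ b) * b = 1) :
    (E*(a*v + b*w) = p*E*u ∧ E*(-(starRingEnd ℂ b)*v + (starRingEnd ℂ a)*w) = p*E*z)
    ↔ (v = a⁻¹*(p*u + (-b)*w) ∧ z = a⁻¹*((-(starRingEnd ℂ b))*u + p⁻¹*w)) := by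
  set A := starRingEnd ℂ a with hA
  set B := starRingEnd ℂ b with hB
  constructor
  · rintro ⟨h1, h2⟩
    have h1' : a*v + b*w = p*u := mul_left_cancel₀ hE (by linear_combination h1)
    have h2' : -B*v + A*w = p*z := mul_left_cancel₀ hE (by linear_combination h2)
    constructor
    · field_simp
      linear_combination h1'
    · field_simp
      linear_combination -a*h2' - B*h1' + w*hab
  · rintro ⟨h1, h2⟩
    have g1' : a*v = p*u + -(b*w) := by rw [h1]; field_simp
    have g2' : a*(p*z) = -B*(p*u) + w := by
      rw [h2]; field_simp
    constructor
    · linear_combination E*g1'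
    · exact mul_left_cancel₀ ha (show a*(E*(-B*v + A*w)) = a*(p*E*z) from by
        linear_combination -E*g2' - E*B*g1' + E*w*hab)

private lemma QW_det_tm (a b : ℂ) (d l : ℝ)
    (hab : (starRingEnd ℂ a) * a + (starRingEnd ℂ b) * b = 1) :
    (transferM a b d l).det = a⁻¹^2 * ((starRingEnd ℂ a) * a) := by
  have hp : Complex.exp (Complex.I * (l - d)) * Complex.exp (-(Complex.I * (l - d))) = 1 := by
    rw [← Complex.exp_add]; simp
  rw [transferM, Matrix.det_smul, Matrix.det_fin_two_of]
  simp only [Fintype.card_fin]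
  linear_combination a⁻¹^2 * hp - a⁻¹^2 * hab

private lemma QW_isUnit_det_tm (a b : ℂ) (ha : a ≠ 0) (d l : ℝ)
    (hab : (starRingEnd ℂ a) * a + (starRingEnd ℂ b) * b = 1) :
    IsUnit (transferM a b d l).det := by
  rw [QW_det_tm a b d l hab]
  have hA : (starRingEnd ℂ a) ≠ 0 := by simpa using ha
  exact isUnit_iff_ne_zero.2
    (mul_ne_zero (pow_ne_zero _ (inv_ne_zero ha)) (mul_ne_zero hA ha))

/-- `JΨ(x) = (Ψ_L(x−1), Ψ_R(x))`. -/
private def QW_Jact (Ψ : ℤ → Fin 2 → ℂ) : ℤ → Fin 2 → ℂ := fun x => ![Ψ (x-1) 0, Ψ x 1]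

private lemma QW_tpsi_pos (T : ℤ → Matrix (Fin 2) (Fin 2) ℂ) (φ : Fin 2 → ℂ) (n : ℕ) :
    tpsi T φ (n : ℤ) = (prodZpos T n).mulVec φ := by
  simp [tpsi]

private lemma QW_tpsi_neg (T : ℤ → Matrix (Fin 2) (Fin 2) ℂ) (φ : Fin 2 → ℂ) (n : ℕ) :
    tpsi T φ (-(n : ℤ)) = (prodZneg T n).mulVec φ := by
  cases n with
  | zero => simp [tpsi, prodZpos, prodZneg]
  | succ n =>
    have h : ¬ (0:ℤ) ≤ -((n:ℤ)+1) := by omega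
    simp only [tpsi]
    push_cast
    rw [if_neg h]
    norm_num

private lemma QW_tpsi_step (T : ℤ → Matrix (Fin 2) (Fin 2) ℂ)
    (hT : ∀ x, T x * (T x)⁻¹ = 1) (φ : Fin 2 → ℂ) (x : ℤ) :
    tpsi T φ (x+1) = (T x).mulVec (tpsi T φ x) := by
  cases x with
  | ofNat n =>
    have h1 : (Int.ofNat n) + 1 = ((n+1 : ℕ) : ℤ) := by rw [Int.ofNat_eq_natCast]; push_cast; ring
    have h2 : (Int.ofNat n) = ((n : ℕ) : ℤ) := rfl
    rw [h1, h2, QW_tpsi_pos, QW_tpsi_pos]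
    show (prodZpos T (n+1)).mulVec φ = _
    rw [prodZpos, ← Matrix.mulVec_mulVec]
  | negSucc n =>
    have h1 : Int.negSucc n = -((n+1 : ℕ) : ℤ) := by
      rw [Int.negSucc_eq]; push_cast; ring
    have h2 : Int.negSucc n + 1 = -((n : ℕ) : ℤ) := by
      rw [Int.negSucc_eq]; push_cast; ring
    rw [h2, h1, QW_tpsi_neg, QW_tpsi_neg]
    show _ = (T (-((n+1:ℕ):ℤ))).mulVec ((prodZneg T (n+1)).mulVec φ)
    rw [prodZneg, Matrix.mulVec_mulVec, ← mul_assoc]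
    have := hT (-((n+1:ℕ):ℤ))
    push_cast at this ⊢
    rw [this, one_mul]

private lemma QW_eq_tpsi (T : ℤ → Matrix (Fin 2) (Fin 2) ℂ)
    (hT' : ∀ x, (T x)⁻¹ * T x = 1) (f : ℤ → Fin 2 → ℂ)
    (hf : ∀ x, f (x+1) = (T x).mulVec (f x)) : f = tpsi T (f 0) := by
  have hpos : ∀ n : ℕ, f (n : ℤ) = (prodZpos T n).mulVec (f 0) := by
    intro n
    induction n with
    | zero => simp [prodZpos, Matrix.one_mulVec]
    | succ n ih =>
      have h1 : ((n+1 : ℕ) : ℤ) = (n : ℤ) + 1 := by push_cast; ring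
      rw [h1, hf, ih]
      show _ = (prodZpos T (n+1)).mulVec (f 0)
      rw [prodZpos, ← Matrix.mulVec_mulVec]
  have hneg : ∀ n : ℕ, f (-(n : ℤ)) = (prodZneg T n).mulVec (f 0) := by
    intro n
    induction n with
    | zero => simp [prodZneg, Matrix.one_mulVec]
    | succ n ih =>
      have h := hf (-((n:ℤ)+1))
      rw [show (-((n:ℤ)+1)+1) = -(n:ℤ) by ring] at h
      have hstep : f (-((n:ℤ)+1)) = ((T (-((n:ℤ)+1)))⁻¹).mulVec (f (-(n:ℤ))) := by
        rw [h, Matrix.mulVec_mulVec, hT', Matrix.one_mulVec]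
      have h2 : (-((n+1 : ℕ) : ℤ)) = -((n:ℤ)+1) := by push_cast; ring
      rw [h2, hstep, ih]
      show _ = (prodZneg T (n+1)).mulVec (f 0)
      rw [prodZneg, ← Matrix.mulVec_mulVec]
      push_cast
      ring_nf
  funext x
  cases x with
  | ofNat n =>
    rw [show (Int.ofNat n) = ((n:ℕ):ℤ) from rfl, hpos, QW_tpsi_pos]
  | negSucc n =>
    rw [show (Int.negSucc n) = -((n+1:ℕ):ℤ) by rw [Int.negSucc_eq]; push_cast; ring,
      hneg, QW_tpsi_neg]

private lemma QW_summable_pair {g h : ℤ → ℝ} (hg : ∀ x, 0 ≤ g x) (hh : ∀ x, 0 ≤ h x) :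
    Summable (fun x => g x + h x) ↔ Summable g ∧ Summable h := by
  constructor
  · intro H
    exact ⟨H.of_nonneg_of_le hg (fun x => le_add_of_nonneg_right (hh x)),
      H.of_nonneg_of_le hh (fun x => le_add_of_nonneg_left (hg x))⟩
  · rintro ⟨H1, H2⟩
    exact H1.add H2

private lemma QW_sq_shift (Ψ : ℤ → Fin 2 → ℂ) :
    SqSummable (JinvAct Ψ) ↔ SqSummable Ψ := by
  have h0 : ∀ x : ℤ, JinvAct Ψ x 0 = Ψ (x+1) 0 := fun x => rfl
  have h1 : ∀ x : ℤ, JinvAct Ψ x 1 = Ψ x 1 := fun x => rfl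
  unfold SqSummable
  simp only [h0, h1]
  rw [QW_summable_pair (fun x => by positivity) (fun x => by positivity),
    QW_summable_pair (fun x => by positivity) (fun x => by positivity)]
  constructor <;> rintro ⟨H1, H2⟩ <;> refine ⟨?_, H2⟩
  · have := (Equiv.addRight (1:ℤ)).summable_iff (f := fun x : ℤ => ‖Ψ x 0‖^2)
    exact this.1 H1
  · have := (Equiv.addRight (1:ℤ)).summable_iff (f := fun x : ℤ => ‖Ψ x 0‖^2)
    exact this.2 H1

private lemma QW_pointwise (a b : ℂ) (d l : ℝ) (ha : a ≠ 0)
    (hab : (starRingEnd ℂ a) * a + (starRingEnd ℂ b) * b = 1)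
    (ψ χ : Fin 2 → ℂ) (z : ℂ) (hw : χ 1 = ψ 1) :
    ((coinM a b d).mulVec ψ 0 = Complex.exp (Complex.I * l) * χ 0 ∧
     (coinM a b d).mulVec ψ 1 = Complex.exp (Complex.I * l) * z)
    ↔ (ψ 0 = (transferM a b d l).mulVec χ 0 ∧ z = (transferM a b d l).mulVec χ 1) := by
  have hpE : Complex.exp (Complex.I * (l - d)) * Complex.exp (Complex.I * d)
      = Complex.exp (Complex.I * l) := by
    rw [← Complex.exp_add]; congr 1; push_cast; ring
  have hpinv : Complex.exp (-(Complex.I * (l - d)))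
      = (Complex.exp (Complex.I * (l - d)))⁻¹ := Complex.exp_neg _
  have H := QW_core a b (Complex.exp (Complex.I * (l - d))) (Complex.exp (Complex.I * d))
    (χ 0) (ψ 0) (ψ 1) z ha (Complex.exp_ne_zero _) (Complex.exp_ne_zero _) hab
  simp only [coinM, transferM, Matrix.mulVec, dotProduct, Fin.sum_univ_two,
    Matrix.smul_apply, Matrix.of_apply, Matrix.cons_val', Matrix.cons_val_zero,
    Matrix.cons_val_one, Matrix.head_cons, Matrix.empty_val', Matrix.cons_val_fin_one,
    Matrix.head_fin_const, smul_eq_mul, hpinv, hw]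
  constructor
  · rintro ⟨h1, h2⟩
    have := H.mp ⟨by linear_combination h1 - (χ 0)*hpE, by linear_combination h2 - z*hpE⟩
    exact ⟨by linear_combination this.1, by linear_combination this.2⟩
  · rintro ⟨h1, h2⟩
    have := H.mpr ⟨by linear_combination h1, by linear_combination h2⟩
    exact ⟨by linear_combination this.1 + (χ 0)*hpE, by linear_combination this.2 + z*hpE⟩

private lemma QW_eig_iff (α β : ℤ → ℂ) (Δ : ℤ → ℝ) (hα : ∀ x, α x ≠ 0)
    (hab : ∀ x, (starRingEnd ℂ (α x)) * (α x) + (starRingEnd ℂ (β x)) * (β x) = 1)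
    (l : ℝ) (Ψ : ℤ → Fin 2 → ℂ) :
    Uact (fun x => coinM (α x) (β x) (Δ x)) Ψ = Complex.exp (Complex.I * l) • Ψ
    ↔ ∀ x, QW_Jact Ψ (x+1) = (transferM (α x) (β x) (Δ x) l).mulVec (QW_Jact Ψ x) := by
  have stepA : (Uact (fun x => coinM (α x) (β x) (Δ x)) Ψ = Complex.exp (Complex.I * l) • Ψ)
      ↔ ∀ x : ℤ, ((coinM (α x) (β x) (Δ x)).mulVec (Ψ x) 0
            = Complex.exp (Complex.I * l) * Ψ (x-1) 0 ∧
          (coinM (α x) (β x) (Δ x)).mulVec (Ψ x) 1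
            = Complex.exp (Complex.I * l) * Ψ (x+1) 1) := by
    constructor
    · intro h x
      have hL := congrFun (congrFun h (x-1)) 0
      have hR := congrFun (congrFun h (x+1)) 1
      simp only [Uact, Matrix.cons_val_zero, Matrix.cons_val_one, Matrix.head_cons,
        Pi.smul_apply, smul_eq_mul, sub_add_cancel, add_sub_cancel_right] at hL hR
      exact ⟨hL, hR⟩
    · intro h
      funext x i
      fin_cases i
      · have := (h (x+1)).1
        simp only [add_sub_cancel_right] at this
        simpa [Uact] using this
      · have := (h (x-1)).2
        simp only [sub_add_cancel] at this
        simpa [Uact] using this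
  rw [stepA]
  apply forall_congr'
  intro x
  have hw : QW_Jact Ψ x 1 = Ψ x 1 := rfl
  have H := QW_pointwise (α x) (β x) (Δ x) l (hα x) (hab x) (Ψ x) (QW_Jact Ψ x)
    (Ψ (x+1) 1) hw
  have h0 : QW_Jact Ψ x 0 = Ψ (x-1) 0 := rfl
  rw [h0] at H
  rw [H]
  have hfun : QW_Jact Ψ (x+1) = ![Ψ x 0, Ψ (x+1) 1] := by
    funext i
    fin_cases i
    · show Ψ (x+1-1) 0 = Ψ x 0
      rw [add_sub_cancel_right]
    · rfl
  rw [hfun, funext_iff, Fin.forall_fin_two]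
  simp only [Matrix.cons_val_zero, Matrix.cons_val_one, Matrix.head_cons]

end Aux

/-- (Corollary 1)  `e^{iλ}` is an eigenvalue of `U` if and only if there exists
`φ ∈ ℂ² \ {0}` such that `Ψ̃_φ` is square-summable; in that case `J⁻¹Ψ̃_φ` is an
eigenvector of `U` associated with `e^{iλ}`. -/
theorem eigenvalue_iff_exists_sq_summable_tpsi
    (α β : ℤ → ℂ) (Δ : ℤ → ℝ)
    (hα : ∀ x, α x ≠ 0)
    (hαβ : ∀ x, ‖α x‖ ^ 2 + ‖β x‖ ^ 2 = 1)
    (hΔ : ∀ x, 0 ≤ Δ x ∧ Δ x < 2 * π)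
    (l : ℝ) (hl : 0 ≤ l ∧ l < 2 * π) :
    ((∃ Ψ : ℤ → Fin 2 → ℂ, SqSummable Ψ ∧ Ψ ≠ 0 ∧
        Uact (fun x => coinM (α x) (β x) (Δ x)) Ψ = Complex.exp (Complex.I * l) • Ψ) ↔
      (∃ φ : Fin 2 → ℂ, φ ≠ 0 ∧
        SqSummable (tpsi (fun x => transferM (α x) (β x) (Δ x) l) φ))) ∧
    (∀ φ : Fin 2 → ℂ, φ ≠ 0 →
      SqSummable (tpsi (fun x => transferM (α x) (β x) (Δ x) l) φ) →
        JinvAct (tpsi (fun x => transferM (α x) (β x) (Δ x) l) φ) ≠ 0 ∧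
        Uact (fun x => coinM (α x) (β x) (Δ x))
            (JinvAct (tpsi (fun x => transferM (α x) (β x) (Δ x) l) φ)) =
          Complex.exp (Complex.I * l) •
            JinvAct (tpsi (fun x => transferM (α x) (β x) (Δ x) l) φ)) := by
  have hab : ∀ x, (starRingEnd ℂ (α x)) * (α x) + (starRingEnd ℂ (β x)) * (β x) = 1 :=
    fun x => QW_hab (hαβ x)
  set T : ℤ → Matrix (Fin 2) (Fin 2) ℂ := fun x => transferM (α x) (β x) (Δ x) l with hTdef
  have hTmul : ∀ x, T x * (T x)⁻¹ = 1 :=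
    fun x => Matrix.mul_nonsing_inv _ (QW_isUnit_det_tm (α x) (β x) (hα x) (Δ x) l (hab x))
  have hTmul' : ∀ x, (T x)⁻¹ * T x = 1 :=
    fun x => Matrix.nonsing_inv_mul _ (QW_isUnit_det_tm (α x) (β x) (hα x) (Δ x) l (hab x))
  have htz : ∀ φ : Fin 2 → ℂ, tpsi T φ 0 = φ := by
    intro φ
    show (if _ then _ else _) = φ
    rw [if_pos le_rfl]
    show (prodZpos T 0).mulVec φ = φ
    rw [prodZpos, Matrix.one_mulVec]
  have part2 : ∀ φ : Fin 2 → ℂ, φ ≠ 0 → SqSummable (tpsi T φ) →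
      JinvAct (tpsi T φ) ≠ 0 ∧
      Uact (fun x => coinM (α x) (β x) (Δ x)) (JinvAct (tpsi T φ)) =
        Complex.exp (Complex.I * l) • JinvAct (tpsi T φ) := by
    intro φ hφ _hsum
    have hJ : QW_Jact (JinvAct (tpsi T φ)) = tpsi T φ := by
      funext x i
      fin_cases i
      · show tpsi T φ (x-1+1) 0 = tpsi T φ x 0
        rw [sub_add_cancel]
      · rfl
    constructor
    · intro h0
      apply hφ
      have e0 : φ 0 = 0 := by
        have h := congrFun (congrFun h0 (-1)) 0
        have h' : tpsi T φ ((-1:ℤ)+1) 0 = 0 := h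
        rwa [show ((-1:ℤ)+1) = 0 by ring, htz] at h'
      have e1 : φ 1 = 0 := by
        have h := congrFun (congrFun h0 0) 1
        have h' : tpsi T φ 0 1 = 0 := h
        rwa [htz] at h'
      funext i
      fin_cases i
      · exact e0
      · exact e1
    · refine (QW_eig_iff α β Δ hα hab l _).mpr ?_
      intro x
      rw [hJ]
      exact QW_tpsi_step T hTmul φ x
  constructor
  · constructor
    · rintro ⟨Ψ, hsum, hne, heig⟩
      have hrec := (QW_eig_iff α β Δ hα hab l Ψ).mp heig
      have hJ : QW_Jact Ψ = tpsi T (QW_Jact Ψ 0) := QW_eq_tpsi T hTmul' (QW_Jact Ψ) hrec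
      refine ⟨QW_Jact Ψ 0, ?_, ?_⟩
      · intro h0
        apply hne
        have hz : QW_Jact Ψ = 0 := by
          rw [hJ, h0]
          funext x i
          simp [tpsi, Matrix.mulVec_zero]
        funext x i
        fin_cases i
        · have := congrFun (congrFun hz (x+1)) 0
          show Ψ x 0 = 0
          rw [show Ψ x 0 = QW_Jact Ψ (x+1) 0 from by
            show Ψ x 0 = Ψ (x+1-1) 0; rw [add_sub_cancel_right], this]
          rfl
        · exact congrFun (congrFun hz x) 1
      · rw [← hJ]
        have hid : JinvAct (QW_Jact Ψ) = Ψ := by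
          funext x i
          fin_cases i
          · show Ψ (x+1-1) 0 = Ψ x 0
            rw [add_sub_cancel_right]
          · rfl
        have h := QW_sq_shift (QW_Jact Ψ)
        rw [hid] at h
        exact h.mp hsum
    · rintro ⟨φ, hφ, hsum⟩
      obtain ⟨hne, heig⟩ := part2 φ hφ hsum
      exact ⟨JinvAct (tpsi T φ), (QW_sq_shift _).mpr hsum, hne, heig⟩
  · intro φ hφ hsum
    exact part2 φ hφ hsum
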